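/- With P¹_{i,j} = (z₁w₁)^i (z₂w₂)^j (z₁ ∂/∂z₁ + w₁ ∂/∂w₁) and R^k_{m,n} as above on ℂ⁴, the Lie bracket satisfies [P¹_{i,j}, R^k_{m,n}] = 2m R^k_{m+i, n+j} for k = 1, 2. -/

import Mathlib

open MvPolynomial

/-- Polynomials on ℂ⁴ with coordinates (z₁, w₁, z₂, w₂). -/
abbrev Poly4 : Type := MvPolynomial (Fin 4) ℂ

/-- Polynomial vector fields on ℂ⁴, identified with their component polynomials. -/
abbrev VF : Type := Fin 4 → Poly4

/-- Action of a vector field on a polynomial (as a derivation). -/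
noncomputable def vAct (v : VF) (p : Poly4) : Poly4 := ∑ i, v i * pderiv i p

/-- Lie bracket of vector fields, [v,w] = vw − wv as differential operators. -/
noncomputable def vBr (v w : VF) : VF := fun k => vAct v (w k) - vAct w (v k)

/-- The monomial (z₁w₁)^m (z₂w₂)^n, i.e. |z₁|^{2m}|z₂|^{2n}. -/
noncomputable def mon (m n : ℕ) : Poly4 := (X 0 * X 1) ^ m * (X 2 * X 3) ^ n

/-- Planar-radial vector field P¹_{m,n} = (z₁w₁)^m (z₂w₂)^n (z₁ ∂/∂z₁ + w₁ ∂/∂w₁). -/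
noncomputable def P1 (m n : ℕ) : VF := fun k => mon m n * ![X 0, X 1, 0, 0] k

/-- Planar-radial vector field P²_{m,n} = (z₁w₁)^m (z₂w₂)^n (z₂ ∂/∂z₂ + w₂ ∂/∂w₂). -/
noncomputable def P2 (m n : ℕ) : VF := fun k => mon m n * ![0, 0, X 2, X 3] k

/-- Planar-rotating vector field R¹_{m,n} = (z₁w₁)^m (z₂w₂)^n (I z₁ ∂/∂z₁ − I w₁ ∂/∂w₁). -/
noncomputable def R1 (m n : ℕ) : VF :=
  fun k => mon m n * ![C Complex.I * X 0, -(C Complex.I) * X 1, 0, 0] k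

/-- Planar-rotating vector field R²_{m,n} = (z₁w₁)^m (z₂w₂)^n (I z₂ ∂/∂z₂ − I w₂ ∂/∂w₂). -/
noncomputable def R2 (m n : ℕ) : VF :=
  fun k => mon m n * ![0, 0, C Complex.I * X 2, -(C Complex.I) * X 3] k

/-- The family of rotating vector fields, indexed by k ∈ {1,2}. -/
noncomputable def Rk : Fin 2 → ℕ → ℕ → VF := ![R1, R2]

/-!
Write P¹_{i,j} = f • E and R^k_{m,n} = g • J_k, where f, g are monomials in z₁w₁ and z₂w₂,
E = z₁∂/∂z₁ + w₁∂/∂w₁ and J_k = I(z_k∂/∂z_k − w_k∂/∂w_k). For any vector fields,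
[f • v, g • w] = f v(g) • w − g w(f) • v + fg • [v, w].
Here z₁w₁ and z₂w₂ are eigenvectors of E with eigenvalues 2 and 0 and are killed by J_k, so
E(g) = 2m g and J_k(f) = 0; and [E, J_k] = 0. Only the first term survives.
-/

section VectorFieldAlgebra

variable (v w : VF) (f g p q : Poly4)

lemma vAct_X (a : Fin 4) : vAct v (X a) = v a := by
  simp [vAct, pderiv_X, Pi.single_apply]

lemma vAct_mul : vAct v (p * q) = vAct v p * q + p * vAct v q := by
  simp only [vAct, pderiv_mul, Finset.sum_add_distrib, Finset.sum_mul, Finset.mul_sum, mul_add]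
  congr 1 <;> exact Finset.sum_congr rfl fun _ _ => by ring

lemma vAct_smul : vAct (f • v) p = f * vAct v p := by
  simp only [vAct, Pi.smul_apply, smul_eq_mul, Finset.mul_sum, mul_assoc]

lemma vBr_smul_smul :
    vBr (f • v) (g • w) = (f * vAct v g) • w - (g * vAct w f) • v + (f * g) • vBr v w := by
  funext l
  simp only [vBr, Pi.add_apply, Pi.sub_apply, Pi.smul_apply, smul_eq_mul, vAct_smul, vAct_mul]
  ring

variable {v p q} {c d : ℂ}

lemma vAct_mul_of_eigen (hp : vAct v p = c • p) (hq : vAct v q = d • q) :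
    vAct v (p * q) = (c + d) • (p * q) := by
  rw [vAct_mul, hp, hq, add_smul, smul_mul_assoc, mul_smul_comm]

lemma vAct_pow_of_eigen (hp : vAct v p = c • p) (m : ℕ) :
    vAct v (p ^ m) = (m * c) • p ^ m := by
  induction m with
  | zero => simp [vAct]
  | succ m ih => rw [pow_succ, vAct_mul_of_eigen ih hp]; push_cast; module

end VectorFieldAlgebra

lemma vAct_mon_of_eigen {v : VF} {a b : ℂ} (h₁ : vAct v (X 0 * X 1) = a • (X 0 * X 1))
    (h₂ : vAct v (X 2 * X 3) = b • (X 2 * X 3)) (m n : ℕ) :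
    vAct v (mon m n) = (m * a + n * b) • mon m n :=
  vAct_mul_of_eigen (vAct_pow_of_eigen h₁ m) (vAct_pow_of_eigen h₂ n)

lemma mon_mul_mon (i j m n : ℕ) : mon i j * mon m n = mon (m + i) (n + j) := by
  simp only [mon]; ring

noncomputable def euler₁ : VF := ![X 0, X 1, 0, 0]

noncomputable def rot : Fin 2 → VF :=
  ![![C Complex.I * X 0, -(C Complex.I) * X 1, 0, 0],
    ![0, 0, C Complex.I * X 2, -(C Complex.I) * X 3]]

lemma P1_eq_smul (i j : ℕ) : P1 i j = mon i j • euler₁ := rfl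

lemma Rk_eq_smul (k : Fin 2) (m n : ℕ) : Rk k m n = mon m n • rot k := by
  fin_cases k <;> rfl

lemma vAct_euler₁_mon (m n : ℕ) : vAct euler₁ (mon m n) = (2 * m : ℂ) • mon m n := by
  rw [vAct_mon_of_eigen (a := 2) (b := 0)] <;>
    simp [vAct_mul, vAct_X, euler₁, two_smul, mul_comm]

lemma vAct_rot_mon (k : Fin 2) (m n : ℕ) : vAct (rot k) (mon m n) = 0 := by
  rw [vAct_mon_of_eigen (a := 0) (b := 0)] <;> fin_cases k <;>
    simp [vAct_mul, vAct_X, rot] <;> ring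

lemma vBr_euler₁_rot (k : Fin 2) : vBr euler₁ (rot k) = 0 := by
  funext l
  fin_cases k <;> fin_cases l <;>
    simp [vBr, vAct, euler₁, rot, pderiv_X, Pi.single_apply] <;> ring

/-- [P¹_{i,j}, R^k_{m,n}] = 2m R^k_{m+i, n+j} for k = 1, 2. -/
theorem bracket_P1_R (k : Fin 2) (i j m n : ℕ) :
    vBr (P1 i j) (Rk k m n) = ((2:ℂ) * (m:ℂ)) • Rk k (m+i) (n+j) := by
  rw [P1_eq_smul, Rk_eq_smul, Rk_eq_smul, vBr_smul_smul, vAct_euler₁_mon, vAct_rot_mon,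
    vBr_euler₁_rot, mul_smul_comm, mon_mul_mon, smul_zero, add_zero, mul_zero, zero_smul,
    sub_zero, smul_assoc]
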